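/- arXiv:1709.08757 — 2 statements merged into one kernel-verified Lean document; each statement's English description precedes it below -/
import Mathlib

section
/- Fix integers r ≥ 2, s ≥ 1, n ≥ 1 and degrees d₁,...,d_s with 1 ≤ d_j ≤ n for all j. If ∑_{j=1}^s (n - d_j + 1) ≤ n(r-1), then the element ∏_{j=1}^s ∏_{i=0}^{n-d_j} (ε_{i+1} + ε_{i+2} + ⋯ + ε_{i+d_j}) is nonzero in the ring ℤ[ε₁,...,ε_n]/(ε₁^r,...,ε_n^r). -/
/-!
Over `ℕ` there is no cancellation: choosing one variable from each linear factor yields a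
monomial with nonzero coefficient in the product, and the coefficient stays nonzero over `ℤ`.
Modulo the monomial ideal `(ε_k ^ r)` it therefore suffices to choose one variable per factor so
that every variable is chosen at most `r - 1` times. Number the factors `t = 0, 1, …, df - 1`
block after block and give factor `t` the variable `ε_{(t mod n) + 1}`; each variable is then
chosen at most `⌈df / n⌉ ≤ r - 1` times. The block of `d_j` consists of `n - d_j + 1 ≤ n`
consecutive factors, so it receives `n - d_j + 1` distinct variables, and once these are sorted
within the block, its `i`-th factor receives a variable between `ε_{i+1}` and `ε_{i+d_j}`, which
occurs in that factor.
-/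

open MvPolynomial Finset

namespace Fin

variable {m n : ℕ} {f : Fin m → Fin n}

lemma val_le_val_apply_of_strictMono (hf : StrictMono f) (i : Fin m) : (i : ℕ) ≤ f i := by
  simpa using card_le_card_of_injOn f (fun j hj => by simpa using hf (mem_Iio.1 hj))
    hf.injective.injOn (s := Iio i) (t := Iio (f i))

lemma val_apply_add_le_of_strictMono (hf : StrictMono f) (i : Fin m) :
    (f i : ℕ) + m ≤ i + n := by
  have := card_le_card_of_injOn f (fun j hj => by simpa using hf (mem_Ioi.1 hj))
    hf.injective.injOn (s := Ioi i) (t := Ioi (f i))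
  simp only [card_Ioi] at this
  omega

end Fin

section Window

variable (R : Type*) [CommSemiring R]

noncomputable def windowSum (n i d : ℕ) : MvPolynomial (Fin n) R :=
  ∑ k ∈ range d, if h : i + k < n then X ⟨i + k, h⟩ else 0

variable {R}

lemma windowSum_eq_X_add {n i d : ℕ} {g : Fin n} (hig : i ≤ g) (hgd : (g : ℕ) < i + d) :
    ∃ q, windowSum R n i d = X g + q := by
  have hmem : (g : ℕ) - i ∈ range d := mem_range.2 (by omega)
  refine ⟨_, (add_sum_erase _ _ hmem).symm.trans (congrArg (· + _) ?_)⟩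
  rw [dif_pos (by omega)]
  congr 2
  omega

lemma map_windowSum {S : Type*} [CommSemiring S] (φ : R →+* S) (n i d : ℕ) :
    map φ (windowSum R n i d) = windowSum S n i d := by
  simp only [windowSum, map_sum, apply_dite, map_X, map_zero]

end Window

lemma coeff_sum_single_prod_X_add_ne_zero {σ ι : Type*} (t : Finset ι)
    (f : ι → MvPolynomial σ ℕ) (g : ι → σ) (hf : ∀ a ∈ t, ∃ q, f a = X (g a) + q) :
    coeff (∑ a ∈ t, Finsupp.single (g a) 1) (∏ a ∈ t, f a) ≠ 0 := by
  induction t using Finset.cons_induction with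
  | empty => simp
  | cons a t _ ih =>
    obtain ⟨q, hq⟩ := hf a (mem_cons_self a t)
    rw [prod_cons, sum_cons, hq, add_mul, coeff_add, coeff_X_mul]
    have := ih fun b hb => hf b (mem_cons_of_mem hb)
    omega

lemma MvPolynomial.quotient_mk_span_X_pow_ne_zero {σ R : Type*} [CommRing R]
    {p : MvPolynomial σ R} {r : ℕ} {μ : σ →₀ ℕ} (hμ : coeff μ p ≠ 0) (hμr : ∀ i, μ i < r) :
    Ideal.Quotient.mk (Ideal.span (Set.range fun i => (X i : MvPolynomial σ R) ^ r)) p ≠ 0 := by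
  have hspan : (Set.range fun i => (X i : MvPolynomial σ R) ^ r)
      = (fun ν => monomial ν (1 : R)) '' Set.range (fun i => Finsupp.single i r) := by
    rw [← Set.range_comp]
    congr 1
    ext1 i
    exact X_pow_eq_monomial
  rw [Ne, Ideal.Quotient.eq_zero_iff_mem, hspan, mem_ideal_span_monomial_image]
  intro h
  obtain ⟨_, ⟨i, rfl⟩, hle⟩ := h μ (mem_support_iff.2 hμ)
  exact (hμr i).not_ge (by simpa using hle i)

section Cyclic

variable (n : ℕ) [NeZero n]

noncomputable def cyclicExponent (M : ℕ) : Fin n →₀ ℕ :=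
  ∑ t ∈ range M, Finsupp.single (Fin.ofNat n t) 1

variable {n}

lemma cyclicExponent_apply_le {M c : ℕ} (hM : M ≤ n * c) (k : Fin n) :
    cyclicExponent n M k ≤ c := by
  have hcount : cyclicExponent n M k = #{t ∈ range M | t % n = k} := by
    simp only [cyclicExponent, Finsupp.finsetSum_apply, Finsupp.single_apply, Fin.ext_iff,
      Fin.val_ofNat, sum_boole, Nat.cast_id]
  -- numbers below `n * c` with the same residue are told apart by their quotients
  rw [hcount, ← card_range c]
  refine card_le_card_of_injOn (· / n) (fun t ht => ?_) (fun t ht u hu htu => ?_)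
  · simp only [coe_filter, mem_range, Set.mem_ofPred_eq] at ht
    exact mem_range.2 (Nat.div_lt_of_lt_mul (by omega))
  · simp only [coe_filter, Set.mem_ofPred_eq] at ht hu
    rw [← Nat.div_add_mod t n, ← Nat.div_add_mod u n, ht.2, hu.2, show t / n = u / n from htu]

lemma Fin.ofNat_add_injective {m : ℕ} (hm : m ≤ n) (a : ℕ) :
    Function.Injective fun i : Fin m => Fin.ofNat n (a + i) := by
  intro i j hij
  simp only [Fin.ext_iff, Fin.val_ofNat] at hij
  exact Fin.ext ((Nat.ModEq.add_left_cancel' a hij).eq_of_lt_of_lt (by omega) (by omega))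

end Cyclic

lemma coeff_cyclicExponent_prod_windowSum_ne_zero {n s : ℕ} [NeZero n] (d : Fin s → ℕ)
    (hd1 : ∀ j, 1 ≤ d j) (hdn : ∀ j, d j ≤ n) :
    coeff (cyclicExponent n (∑ j, (n - d j + 1)))
      (∏ j, ∏ i ∈ range (n - d j + 1), windowSum ℕ n i (d j)) ≠ 0 := by
  set m : Fin s → ℕ := fun j => n - d j + 1
  have hm : ∀ j, m j + d j = n + 1 := fun j => by
    have := hd1 j
    have := hdn j
    simp only [m]
    omega
  let c : (Σ j, Fin (m j)) → Fin n := fun a => Fin.ofNat n (finSigmaFinEquiv a)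
  have hc : ∀ j, Function.Injective fun i => c ⟨j, i⟩ := by
    intro j
    simp only [c, finSigmaFinEquiv_apply]
    exact Fin.ofNat_add_injective (n := n) (m := m j) (by have := hm j; have := hd1 j; omega)
      (∑ x : Fin j, m (Fin.castLE j.2.le x))
  let σ : ∀ j, Equiv.Perm (Fin (m j)) := fun j => Tuple.sort fun i => c ⟨j, i⟩
  have hσ : ∀ j, StrictMono fun i => c ⟨j, σ j i⟩ := fun j =>
    (Tuple.monotone_sort _).strictMono_of_injective ((hc j).comp (σ j).injective)
  have hexp : cyclicExponent n (∑ j, m j)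
      = ∑ a : Σ j, Fin (m j), Finsupp.single (c ⟨a.1, σ a.1 a.2⟩) 1 := by
    rw [cyclicExponent, ← Fin.sum_univ_eq_sum_range, ← Equiv.sum_comp finSigmaFinEquiv,
      ← Equiv.sum_comp (Equiv.sigmaCongrRight σ)]
    rfl
  have hprod : ∏ j, ∏ i ∈ range (m j), windowSum ℕ n i (d j)
      = ∏ a : Σ j, Fin (m j), windowSum ℕ n a.2 (d a.1) := by
    simp only [Fintype.prod_sigma, prod_range]
  rw [hexp, hprod]
  refine coeff_sum_single_prod_X_add_ne_zero _ _ _ fun a _ =>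
    windowSum_eq_X_add (Fin.val_le_val_apply_of_strictMono (hσ a.1) a.2) ?_
  have := Fin.val_apply_add_le_of_strictMono (hσ a.1) a.2
  have := hm a.1
  omega

theorem stmt_5_general (r s n : ℕ) (hr : 2 ≤ r) (hn : 1 ≤ n)
    (d : Fin s → ℕ) (hd1 : ∀ j, 1 ≤ d j) (hdn : ∀ j, d j ≤ n)
    (hdf : ∑ j, (n - d j + 1) ≤ n * (r - 1)) :
    (Ideal.Quotient.mk (Ideal.span (Set.range fun i : Fin n => (X i : MvPolynomial (Fin n) ℤ) ^ r)))
        (∏ j, ∏ i ∈ Finset.range (n - d j + 1),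
          ∑ k ∈ Finset.range (d j),
            (if h : i + k < n then (X (⟨i + k, h⟩ : Fin n) : MvPolynomial (Fin n) ℤ) else 0))
      ≠ 0 := by
  have : NeZero n := ⟨by omega⟩
  refine quotient_mk_span_X_pow_ne_zero (μ := cyclicExponent n (∑ j, (n - d j + 1)))
    ?_ fun k => by have := cyclicExponent_apply_le hdf k; omega
  change coeff _ (∏ j, ∏ i ∈ range (n - d j + 1), windowSum ℤ n i (d j)) ≠ 0
  simp_rw [← map_windowSum (Nat.castRingHom ℤ), ← map_prod, coeff_map, eq_natCast,
    Nat.cast_ne_zero]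
  exact coeff_cyclicExponent_prod_windowSum_ne_zero d hd1 hdn

/-- Nonvanishing of the Chow-class product: if the defect ∑ⱼ (n - dⱼ + 1) is at most
n(r-1), then ∏ⱼ ∏_{i=0}^{n-dⱼ} (ε_{i+1} + ⋯ + ε_{i+dⱼ}) is nonzero in
ℤ[ε₁,…,ε_n]/(ε₁^r,…,ε_n^r).  (Variables are 0-indexed: ε_{k+1} is `X k`.) -/
theorem stmt_5 (r s n : ℕ) (hr : 2 ≤ r) (hs : 1 ≤ s) (hn : 1 ≤ n)
    (d : Fin s → ℕ) (hd1 : ∀ j, 1 ≤ d j) (hdn : ∀ j, d j ≤ n)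
    (hdf : ∑ j, (n - d j + 1) ≤ n * (r - 1)) :
    (Ideal.Quotient.mk (Ideal.span (Set.range fun i : Fin n => (X i : MvPolynomial (Fin n) ℤ) ^ r)))
        (∏ j, ∏ i ∈ Finset.range (n - d j + 1),
          ∑ k ∈ Finset.range (d j),
            (if h : i + k < n then (X (⟨i + k, h⟩ : Fin n) : MvPolynomial (Fin n) ℤ) else 0))
      ≠ 0 :=
  stmt_5_general r s n hr hn d hd1 hdn hdf
end

section
/- In ℤ[ε₁,...,ε_n]/(ε₁²,...,ε_n²), for n ≥ 2 the product ∏_{i=0}^{n-2}(ε_{i+1}+ε_{i+2}) of the n-1 consecutive-pair sums is equal to a polynomial with nonnegative coefficients whose coefficient at the square-free monomial ε₁ε₂⋯ε_{n-1} is 1; in particular the product is nonzero. -/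
open MvPolynomial Finset

/-!
Modulo the squares of the variables, `∏_{i < n-1} (ε_i + ε_{i+1}) = ∑_{k < n} ∏_{i ≠ k} ε_i`:
a term of the expansion survives only if it never picks the same variable twice, which forces
it to pick `ε_i` from the factors before some index `k` and `ε_{i+1}` from those after it.
This representative is a sum of distinct squarefree monomials with coefficient `1`, one of them
`ε_0 ⋯ ε_{n-2}` (the case `k = n - 1`). It is nonzero in the quotient because an element of the
monomial ideal `(ε_i²)` has no squarefree monomial in its support.
-/

theorem prod_range_add_succ_eq_sum_prod_erase {A : Type*} [CommSemiring A] (e : ℕ → A)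
    (he : ∀ i, e i * e i = 0) (m : ℕ) :
    ∏ i ∈ range m, (e i + e (i + 1)) = ∑ k ∈ range (m + 1), ∏ i ∈ (range (m + 1)).erase k, e i := by
  induction m with
  | zero => simp
  | succ m ih =>
    have hvanish : ∀ k ∈ range m, (∏ i ∈ (range (m + 1)).erase k, e i) * e m = 0 := by
      intro k hk
      rw [← mul_prod_erase _ _ (mem_erase.2 ⟨(mem_range.1 hk).ne', self_mem_range_succ m⟩),
        mul_right_comm, he, zero_mul]
    have hshift : ∀ k ∈ range (m + 1), ∏ i ∈ (range (m + 2)).erase k, e i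
        = (∏ i ∈ (range (m + 1)).erase k, e i) * e (m + 1) := by
      intro k hk
      rw [range_add_one (n := m + 1), erase_insert_of_ne (mem_range.1 hk).ne',
        prod_insert (by simp), mul_comm]
    rw [prod_range_succ, ih, sum_range_succ (n := m + 1), sum_congr rfl hshift, ← sum_mul,
      range_add_one (n := m + 1), erase_insert notMem_range_self,
      ← prod_erase_mul _ _ (self_mem_range_succ m), mul_add, sum_range_succ, add_mul,
      add_mul, sum_mul, sum_eq_zero hvanish]
    ring

theorem coeff_eq_zero_of_mem_span_X_sq {σ R : Type*} [CommSemiring R] {p : MvPolynomial σ R}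
    (hp : p ∈ Ideal.span (Set.range fun i : σ => (X i : MvPolynomial σ R) ^ 2))
    {m : σ →₀ ℕ} (hm : ∀ i, m i < 2) : p.coeff m = 0 := by
  have hgen : Set.range (fun i : σ => (X i : MvPolynomial σ R) ^ 2)
      = (fun s => monomial s (1 : R)) '' Set.range fun i => Finsupp.single i 2 := by
    rw [← Set.range_comp]
    simp only [Function.comp_def, X_pow_eq_monomial]
  rw [hgen, mem_ideal_span_monomial_image] at hp
  by_contra h
  obtain ⟨_, ⟨i, rfl⟩, hle⟩ := hp m (mem_support_iff.2 h)
  exact (hm i).not_ge (by simpa using hle i)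

section FinVariables

variable {R : Type*} [CommSemiring R]

noncomputable def natX (n i : ℕ) : MvPolynomial (Fin n) R :=
  if h : i < n then X ⟨i, h⟩ else 0

noncomputable def indicatorExp (n : ℕ) (s : Finset ℕ) : Fin n →₀ ℕ :=
  Finsupp.equivFunOnFinite.symm fun i => if (i : ℕ) ∈ s then 1 else 0

theorem indicatorExp_apply (n : ℕ) (s : Finset ℕ) (i : Fin n) :
    indicatorExp n s i = if (i : ℕ) ∈ s then 1 else 0 := rfl

theorem indicatorExp_apply_lt_two (n : ℕ) (s : Finset ℕ) (i : Fin n) : indicatorExp n s i < 2 := by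
  rw [indicatorExp_apply]
  split_ifs <;> omega

theorem prod_natX {n : ℕ} {s : Finset ℕ} (hs : s ⊆ range n) :
    ∏ i ∈ s, (natX n i : MvPolynomial (Fin n) R) = monomial (indicatorExp n s) 1 := by
  induction s using Finset.induction_on with
  | empty =>
    have hzero : indicatorExp n ∅ = 0 := by
      ext i
      simp [indicatorExp_apply]
    rw [prod_empty, hzero, one_def]
  | insert a s ha ih =>
    obtain ⟨han, hs⟩ := insert_subset_iff.1 hs
    have hexp : Finsupp.single ⟨a, mem_range.1 han⟩ 1 + indicatorExp n s
        = indicatorExp n (insert a s) := by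
      ext i
      simp only [Finsupp.add_apply, Finsupp.single_apply, indicatorExp_apply, mem_insert,
        Fin.ext_iff]
      split_ifs <;> grind
    rw [prod_insert ha, ih hs, natX, dif_pos (mem_range.1 han), X, monomial_mul, one_mul, hexp]

theorem coeff_sum_monomial_indicatorExp (n : ℕ) (m : Fin n →₀ ℕ) :
    (∑ k ∈ range n, monomial (indicatorExp n ((range n).erase k)) (1 : R)).coeff m
      = #{k ∈ range n | indicatorExp n ((range n).erase k) = m} := by
  simp only [coeff_sum, coeff_monomial, sum_boole]

theorem filter_indicatorExp_range_erase_eq {n : ℕ} (hn : 1 ≤ n) :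
    {k ∈ range n | indicatorExp n ((range n).erase k) = indicatorExp n (range (n - 1))}
      = {n - 1} := by
  ext k
  simp only [mem_filter, mem_range, mem_singleton]
  constructor
  · rintro ⟨hk, h⟩
    have := DFunLike.congr_fun h ⟨k, hk⟩
    simp only [indicatorExp_apply, mem_erase, mem_range] at this
    split_ifs at this <;> omega
  · rintro rfl
    refine ⟨by omega, ?_⟩
    ext i
    simp only [indicatorExp_apply, mem_erase, mem_range]
    split_ifs <;> omega

end FinVariables

theorem mk_prod_natX_add_natX {R : Type*} [CommRing R] {n : ℕ} (hn : 1 ≤ n) :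
    Ideal.Quotient.mk (Ideal.span (Set.range fun i : Fin n => (X i : MvPolynomial (Fin n) R) ^ 2))
        (∏ i ∈ range (n - 1), (natX n i + natX n (i + 1)))
      = Ideal.Quotient.mk _ (∑ k ∈ range n, monomial (indicatorExp n ((range n).erase k)) 1) := by
  set I := Ideal.span (Set.range fun i : Fin n => (X i : MvPolynomial (Fin n) R) ^ 2)
  have hsq : ∀ i, Ideal.Quotient.mk I (natX n i) * Ideal.Quotient.mk I (natX n i) = 0 := by
    intro i
    rw [← map_mul, Ideal.Quotient.eq_zero_iff_mem, natX]
    split_ifs with h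
    · exact Ideal.subset_span ⟨⟨i, h⟩, sq _⟩
    · rw [mul_zero]
      exact zero_mem _
  rw [← sum_congr rfl fun k _ => prod_natX (erase_subset k (range n))]
  simp only [map_prod, map_add, map_sum]
  rw [prod_range_add_succ_eq_sum_prod_erase _ hsq, Nat.sub_add_cancel hn]

/-- In ℤ[ε₁,…,ε_n]/(ε₁²,…,ε_n²) with n ≥ 2, the product ∏_{i=0}^{n-2}(ε_{i+1}+ε_{i+2})
is represented by a polynomial with exponents < 2 and nonnegative coefficients whose
coefficient at ε₁ε₂⋯ε_{n-1} is 1; in particular the product is nonzero.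
(0-indexed: ε_{k+1} is `X k`.) -/
theorem stmt_12 (n : ℕ) (hn : 2 ≤ n) :
    (∃ p : MvPolynomial (Fin n) ℤ,
      (∀ m ∈ p.support, ∀ i, m i < 2) ∧ (∀ m, 0 ≤ p.coeff m) ∧
      p.coeff (Finsupp.equivFunOnFinite.symm fun i : Fin n => if (i : ℕ) < n - 1 then 1 else 0)
        = 1 ∧
      Ideal.Quotient.mk
          (Ideal.span (Set.range fun i : Fin n => (X i : MvPolynomial (Fin n) ℤ) ^ 2)) p
        = Ideal.Quotient.mk _
            (∏ i ∈ Finset.range (n - 1),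
              ((if h : i < n then (X (⟨i, h⟩ : Fin n) : MvPolynomial (Fin n) ℤ) else 0) +
               (if h : i + 1 < n then (X (⟨i + 1, h⟩ : Fin n) : MvPolynomial (Fin n) ℤ) else 0))))
    ∧
    Ideal.Quotient.mk
        (Ideal.span (Set.range fun i : Fin n => (X i : MvPolynomial (Fin n) ℤ) ^ 2))
        (∏ i ∈ Finset.range (n - 1),
          ((if h : i < n then (X (⟨i, h⟩ : Fin n) : MvPolynomial (Fin n) ℤ) else 0) +
           (if h : i + 1 < n then (X (⟨i + 1, h⟩ : Fin n) : MvPolynomial (Fin n) ℤ) else 0)))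
      ≠ 0 := by
  set p : MvPolynomial (Fin n) ℤ := ∑ k ∈ range n, monomial (indicatorExp n ((range n).erase k)) 1
  have hprod := (mk_prod_natX_add_natX (R := ℤ) (by omega : 1 ≤ n)).symm
  have htop : indicatorExp n (range (n - 1))
      = Finsupp.equivFunOnFinite.symm fun i : Fin n => if (i : ℕ) < n - 1 then 1 else 0 := by
    ext i
    simp [indicatorExp_apply]
  have hcoeff_top : p.coeff (indicatorExp n (range (n - 1))) = 1 := by
    rw [coeff_sum_monomial_indicatorExp, filter_indicatorExp_range_erase_eq (by omega),
      card_singleton, Nat.cast_one]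
  refine ⟨⟨p, fun m hm i => ?_, fun m => ?_, htop ▸ hcoeff_top, hprod⟩, fun h0 => ?_⟩
  · rw [mem_support_iff, coeff_sum_monomial_indicatorExp, Nat.cast_ne_zero, card_ne_zero] at hm
    obtain ⟨k, -, rfl⟩ := filter_nonempty_iff.1 hm
    exact indicatorExp_apply_lt_two _ _ i
  · rw [coeff_sum_monomial_indicatorExp]
    exact Nat.cast_nonneg _
  · have hp : p ∈ Ideal.span (Set.range fun i : Fin n => (X i : MvPolynomial (Fin n) ℤ) ^ 2) :=
      Ideal.Quotient.eq_zero_iff_mem.1 (hprod.trans h0)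
    have := coeff_eq_zero_of_mem_span_X_sq hp (indicatorExp_apply_lt_two n (range (n - 1)))
    exact one_ne_zero (hcoeff_top.symm.trans this)
end
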